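/- arXiv:1911.04935 — 7 statements merged into one kernel-verified Lean document; each statement's English description precedes it below -/
import Mathlib

section
/- Every return-time set contains a set of the form (Q−Q)∩ℕ where Q ⊆ ℕ has positive upper density. -/
open MeasureTheory Filter

/-- The process `X` is (strictly) stationary for the probability measure `μ`. -/
def IsStationaryProcess {Ω F : Type*} [MeasurableSpace Ω]
    (μ : Measure Ω) (X : ℤ → Ω → F) : Prop :=
  ∀ (k : ℤ) (n : ℕ) (t : Fin n → ℤ) (s : Fin n → Set F),
    μ (⋂ j, X (t j) ⁻¹' s j) = μ (⋂ j, X (t j + k) ⁻¹' s j)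

/-- Shannon entropy of a finite-valued random variable. -/
noncomputable def shannonEntropy {Ω F : Type*} [MeasurableSpace Ω] (μ : Measure Ω)
    [Fintype F] (Y : Ω → F) : ℝ :=
  ∑ y : F, Real.negMulLog ((μ (Y ⁻¹' {y})).toReal)

/-- Joint Shannon entropy of the variables of the process indexed by a
finite set of times. -/
noncomputable def jointEntropy {Ω F : Type*} [MeasurableSpace Ω] [Fintype F]
    (μ : Measure Ω) (X : ℤ → Ω → F) (s : Finset ℤ) : ℝ :=
  shannonEntropy μ (fun ω (i : s) => X i ω)

/-- Entropy of a finite-valued process: h = lim_n (1/n) H(X_1,…,X_n)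
(as a limsup). -/
noncomputable def procEntropy {Ω F : Type*} [MeasurableSpace Ω] [Fintype F]
    (μ : Measure Ω) (X : ℤ → Ω → F) : ℝ :=
  Filter.atTop.limsup (fun n : ℕ => jointEntropy μ X (Finset.Icc 1 (n : ℤ)) / n)

/-- Conditional entropy H(X_0 | X_i : i ∈ S), as the infimum over finite
subsets s ⊆ S of H(X_0, X_s) − H(X_s). -/
noncomputable def condEntropyOn {Ω F : Type*} [MeasurableSpace Ω] [Fintype F]
    (μ : Measure Ω) (X : ℤ → Ω → F) (S : Set ℤ) : ℝ :=
  ⨅ s : {s : Finset ℤ // ↑s ⊆ S},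
    (jointEntropy μ X (insert 0 s.1) - jointEntropy μ X s.1)

/-- X_0 is (a.e.) measurable with respect to the σ-algebra generated by
the variables (X_i)_{i ∈ S}. -/
def measurableWrtOn {Ω F : Type*} [MeasurableSpace Ω] [MeasurableSpace F]
    (μ : Measure Ω) (X : ℤ → Ω → F) (S : Set ℤ) : Prop :=
  ∃ g : (S → F) → F, Measurable g ∧
    ∀ᵐ ω ∂μ, X 0 ω = g (fun i => X i ω)

/-- A set P ⊆ ℕ is predictive if for every zero-entropy finite-valued
stationary process, X_0 is measurable with respect to (X_p)_{p ∈ P}. -/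
def Predictive (P : Set ℕ) : Prop :=
  ∀ (Ω F : Type) [MeasurableSpace Ω] [MeasurableSpace F] [Fintype F]
    (μ : Measure Ω) [IsProbabilityMeasure μ] (X : ℤ → Ω → F),
    (∀ i, Measurable (X i)) → IsStationaryProcess μ X → procEntropy μ X = 0 →
    measurableWrtOn μ X {i : ℤ | ∃ n ∈ P, (n : ℤ) = i}

/-- Upper density of a set of naturals: limsup_n |Q ∩ {1,…,n}| / n. -/
noncomputable def upperDensity (Q : Set ℕ) : ℝ :=
  Filter.atTop.limsup (fun n : ℕ =>
    (∑ m ∈ Finset.Icc 1 n, Set.indicator Q (fun _ => (1 : ℝ)) m) / n)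

/-- (Q − Q) ∩ ℕ, the set of positive differences of elements of Q, in ℤ. -/
def posDiffs (Q : Set ℕ) : Set ℤ :=
  {d : ℤ | 1 ≤ d ∧ ∃ a ∈ Q, ∃ b ∈ Q, (a : ℤ) - (b : ℤ) = d}

/-!
Let `c = μ U`. By invariance, the number of visits of `x` to `U` at times `1, …, N` has mean
`N c`; being at most `N`, it is at least `N c / 2` on a set of measure at least `c / 2`. The points
lying in infinitely many of these sets form a set of measure at least `c / 2`, and for each of them
the visit times `Q = {n | Tⁿ x ∈ U}` have upper density at least `c / 2`. Discarding the null set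
of points that lie in some null set `T⁻ᵃ U ∩ T⁻ᵇ U`, any `a > b` in `Q` then gives
`μ (U ∩ T⁻⁽ᵃ⁻ᵇ⁾ U) = μ (T⁻ᵃ U ∩ T⁻ᵇ U) > 0`.
-/

open Finset
open scoped ENNReal

open Classical in
noncomputable def countingFunction (Q : Set ℕ) (n : ℕ) : ℕ := #{m ∈ Icc 1 n | m ∈ Q}

theorem countingFunction_le (Q : Set ℕ) (n : ℕ) : countingFunction Q n ≤ n := by
  classical
  simpa [countingFunction] using card_filter_le (Icc 1 n) (· ∈ Q)

theorem upperDensity_eq_limsup_countingFunction (Q : Set ℕ) :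
    upperDensity Q = limsup (fun n : ℕ => (countingFunction Q n : ℝ) / n) atTop := by
  classical
  simp only [upperDensity, countingFunction, natCast_card_filter, Set.indicator_apply]

theorem le_upperDensity_of_frequently {Q : Set ℕ} {t : ℝ}
    (h : ∃ᶠ n : ℕ in atTop, t * n ≤ countingFunction Q n) : t ≤ upperDensity Q := by
  rw [upperDensity_eq_limsup_countingFunction]
  refine le_limsup_of_frequently_le ?_ (isBoundedUnder_of ⟨1, fun n => ?_⟩)
  · refine (h.and_eventually (eventually_gt_atTop 0)).mono fun n ⟨hn, hn0⟩ => ?_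
    rwa [le_div_iff₀ (by exact_mod_cast hn0)]
  · exact div_le_one_of_le₀ (by exact_mod_cast countingFunction_le Q n) n.cast_nonneg

section Measure

variable {α : Type*} [MeasurableSpace α] {μ : Measure α}

theorem ae_measure_ne_zero_of_mem {ι : Type*} [Countable ι] (s : ι → Set α) :
    ∀ᵐ x ∂μ, ∀ i, x ∈ s i → μ (s i) ≠ 0 := by
  rw [ae_all_iff]
  intro i
  by_cases h : μ (s i) = 0
  · filter_upwards [measure_eq_zero_iff_ae_notMem.mp h] with x hx hmem using absurd hmem hx
  · exact Eventually.of_forall fun _ _ => h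

theorem limsup_measure_le_measure_limsup [IsFiniteMeasure μ] {s : ℕ → Set α}
    (hs : ∀ n, NullMeasurableSet (s n) μ) :
    limsup (fun n => μ (s n)) atTop ≤ μ (limsup s atTop) := by
  have htail : Antitone fun n => ⋃ i ≥ n, s i := fun m n hmn =>
    Set.biUnion_mono (fun i hi => le_trans hmn hi) fun _ _ => le_rfl
  rw [limsup_eq_iInf_iSup_of_nat, limsup_eq_iInf_iSup_of_nat]
  change _ ≤ μ (⋂ n, ⋃ i ≥ n, s i)
  rw [htail.measure_iInter (fun n => .biUnion (Set.to_countable _) fun i _ => hs i)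
    ⟨0, measure_ne_top μ _⟩]
  exact iInf_mono fun n => iSup₂_le fun i hi => measure_mono (Set.subset_biUnion_of_mem hi)

theorem lintegral_le_mul_measure_setOf_le_add [IsProbabilityMeasure μ] {f : α → ℝ≥0∞}
    (hf : Measurable f) {M : ℝ≥0∞} (hfM : ∀ x, f x ≤ M) (t : ℝ≥0∞) :
    ∫⁻ x, f x ∂μ ≤ M * μ {x | t ≤ f x} + t := by
  have hA : MeasurableSet {x | t ≤ f x} := measurableSet_le measurable_const hf
  calc ∫⁻ x, f x ∂μ ≤ ∫⁻ x, ({x | t ≤ f x}.indicator (fun _ => M) x + t) ∂μ := by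
        refine lintegral_mono fun x => ?_
        by_cases hx : t ≤ f x
        · simpa [hx] using le_add_right (hfM x)
        · simpa [hx] using (not_le.mp hx).le
    _ = M * μ {x | t ≤ f x} + t := by
        rw [lintegral_add_right _ measurable_const, lintegral_indicator_const hA, lintegral_const,
          measure_univ, mul_one]

end Measure

section Dynamics

variable {α : Type*} {T : α → α} {U : Set α}

def visitTimes (T : α → α) (U : Set α) (x : α) : Set ℕ := {n | T^[n] x ∈ U}

theorem natCast_countingFunction_visitTimes (N : ℕ) (x : α) :
    (countingFunction (visitTimes T U x) N : ℝ≥0∞) =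
      ∑ m ∈ Icc 1 N, (T^[m] ⁻¹' U).indicator 1 x := by
  classical
  simp only [countingFunction, natCast_card_filter, Set.indicator_apply]
  rfl

variable [MeasurableSpace α] {μ : Measure α}

theorem measurable_countingFunction_visitTimes (hT : Measurable T) (hU : MeasurableSet U)
    (N : ℕ) : Measurable fun x => (countingFunction (visitTimes T U x) N : ℝ≥0∞) := by
  simp_rw [natCast_countingFunction_visitTimes]
  exact Finset.measurable_sum _ fun m _ => measurable_const.indicator (hT.iterate m hU)

theorem lintegral_countingFunction_visitTimes (hT : MeasurePreserving T μ μ)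
    (hU : MeasurableSet U) (N : ℕ) :
    ∫⁻ x, (countingFunction (visitTimes T U x) N : ℝ≥0∞) ∂μ = N * μ U := by
  simp_rw [natCast_countingFunction_visitTimes]
  rw [lintegral_finsetSum _ fun m _ =>
    measurable_one.indicator (hT.measurable.iterate m hU)]
  simp_rw [lintegral_indicator_one (hT.measurable.iterate _ hU),
    (hT.iterate _).measure_preimage hU.nullMeasurableSet]
  simp

theorem half_measure_le_measure_setOf_le_countingFunction_visitTimes [IsProbabilityMeasure μ]
    (hT : MeasurePreserving T μ μ) (hU : MeasurableSet U) {N : ℕ} (hN : N ≠ 0) :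
    μ U / 2 ≤ μ {x | N * (μ U / 2) ≤ countingFunction (visitTimes T U x) N} := by
  set A := {x | N * (μ U / 2) ≤ (countingFunction (visitTimes T U x) N : ℝ≥0∞)}
  have hbound : N * μ U ≤ N * (μ A + μ U / 2) := by
    rw [← lintegral_countingFunction_visitTimes hT hU N, mul_add]
    exact lintegral_le_mul_measure_setOf_le_add (measurable_countingFunction_visitTimes
      hT.measurable hU N) (fun x => by exact_mod_cast countingFunction_le _ N) _
  have hcancel : μ U ≤ μ A + μ U / 2 :=
    (ENNReal.mul_le_mul_iff_right (by exact_mod_cast hN) (ENNReal.natCast_ne_top N)).mp hbound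
  rwa [← ENNReal.sub_half (measure_ne_top μ U), tsub_le_iff_right]

theorem half_measure_le_measure_setOf_le_upperDensity_visitTimes [IsProbabilityMeasure μ]
    (hT : MeasurePreserving T μ μ) (hU : MeasurableSet U) :
    μ U / 2 ≤ μ {x | (μ U / 2).toReal ≤ upperDensity (visitTimes T U x)} := by
  set A : ℕ → Set α := fun N => {x | N * (μ U / 2) ≤ countingFunction (visitTimes T U x) N}
  have hA : μ U / 2 ≤ limsup (fun N => μ (A N)) atTop :=
    le_limsup_of_frequently_le ((eventually_ne_atTop 0).mono fun N hN =>
      half_measure_le_measure_setOf_le_countingFunction_visitTimes hT hU hN).frequently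
      (by isBoundedDefault)
  have hA_meas : ∀ N, NullMeasurableSet (A N) μ := fun N =>
    (measurableSet_le measurable_const
      (measurable_countingFunction_visitTimes hT.measurable hU N)).nullMeasurableSet
  have hsub : limsup A atTop ⊆ {x | (μ U / 2).toReal ≤ upperDensity (visitTimes T U x)} := by
    intro x hx
    refine le_upperDensity_of_frequently ((mem_limsup_iff_frequently_mem.mp hx).mono ?_)
    intro N hN
    have := ENNReal.toReal_mono (ENNReal.natCast_ne_top _) hN
    rwa [ENNReal.toReal_mul, ENNReal.toReal_natCast, ENNReal.toReal_natCast, mul_comm] at this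
  exact hA.trans <| (limsup_measure_le_measure_limsup hA_meas).trans (measure_mono hsub)

theorem measure_preimage_iterate_add_inter (hT : MeasurePreserving T μ μ)
    (hU : MeasurableSet U) (n b : ℕ) :
    μ (T^[n + b] ⁻¹' U ∩ T^[b] ⁻¹' U) = μ (U ∩ T^[n] ⁻¹' U) := by
  rw [← (hT.iterate b).measure_preimage (hU.inter (hT.measurable.iterate n hU)).nullMeasurableSet,
    Function.iterate_add, Set.preimage_comp, Set.preimage_inter, Set.inter_comm]

theorem ae_posDiffs_visitTimes (hT : MeasurePreserving T μ μ) (hU : MeasurableSet U) :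
    ∀ᵐ x ∂μ, ∀ n : ℕ, (n : ℤ) ∈ posDiffs (visitTimes T U x) → 0 < μ (U ∩ T^[n] ⁻¹' U) := by
  filter_upwards [ae_measure_ne_zero_of_mem fun p : ℕ × ℕ => T^[p.1] ⁻¹' U ∩ T^[p.2] ⁻¹' U]
    with x hx n ⟨_, a, ha, b, hb, hab⟩
  obtain rfl : a = n + b := by omega
  rw [← measure_preimage_iterate_add_inter hT hU]
  exact pos_iff_ne_zero.mpr (hx (n + b, b) ⟨ha, hb⟩)

end Dynamics

theorem returnTimeSet_contains_diffSet_general {Y : Type} [MeasurableSpace Y]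
    (μ : Measure Y) [IsProbabilityMeasure μ] (T : Y → Y)
    (hT : MeasurePreserving T μ μ) (U : Set Y) (hU : MeasurableSet U)
    (hpos : 0 < μ U) :
    ∃ Q : Set ℕ, 0 < upperDensity Q ∧
      ∀ n : ℕ, (n : ℤ) ∈ posDiffs Q → 0 < μ (U ∩ T^[n] ⁻¹' U) := by
  have hhalf : 0 < μ U / 2 := ENNReal.half_pos hpos.ne'
  obtain ⟨x, hx_density, hx_diffs⟩ := Measure.exists_mem_of_measure_ne_zero_of_ae
    (hhalf.trans_le (half_measure_le_measure_setOf_le_upperDensity_visitTimes hT hU)).ne'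
    (ae_restrict_of_ae (ae_posDiffs_visitTimes hT hU))
  exact ⟨visitTimes T U x, (ENNReal.toReal_pos hhalf.ne' (by finiteness)).trans_le hx_density,
    hx_diffs⟩

/-- Every return-time set (for a ppt on a Polish space) contains a set of the
form (Q−Q)∩ℕ, where Q ⊆ ℕ has positive upper density. -/
theorem returnTimeSet_contains_diffSet {Y : Type} [TopologicalSpace Y]
    [PolishSpace Y] [MeasurableSpace Y] [BorelSpace Y]
    (μ : Measure Y) [IsProbabilityMeasure μ] (T : Y → Y)
    (hT : MeasurePreserving T μ μ) (U : Set Y) (hU : MeasurableSet U)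
    (hpos : 0 < μ U) :
    ∃ Q : Set ℕ, 0 < upperDensity Q ∧
      ∀ n : ℕ, (n : ℤ) ∈ posDiffs Q → 0 < μ (U ∩ T^[n] ⁻¹' U) :=
  returnTimeSet_contains_diffSet_general μ T hT U hU hpos
end

section
/- For integers k ≥ 2 and 1 ≤ r ≤ k−1, the arithmetic progression kℕ + r is not a predictive set: there exists a finite-valued stationary process of zero entropy with H(X_0 | X_p : p ∈ kℕ+r) = log 2. -/
/-!
Take a uniform phase `Z ∈ ℤ/k` and independent fair signs `ζ_e`, one for each residue `e`
mod `k`, and let `X_i = (Z + i, ζ_{i mod k})`. Shifting time by `c` is the relabelling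
`(Z, ζ) ↦ (Z + c, ζ_{· + c})` of the sample space, which preserves the uniform measure, so the
process is stationary; it has zero entropy because the sample space is finite. Finitely many
observations `X_s` (`s ≠ ∅`) determine exactly `Z` and the signs at the residues met by `s`, so
`H(X_s) = log (k · 2^#(s mod k))`. All times in `kℕ + r` have the same nonzero residue `r`: they
reveal `Z` and `ζ_r`, while `X_0` also needs the independent fair sign `ζ_0`, so exactly one bit
stays unknown.
-/

open MeasureTheory Filter

open ProbabilityTheory

section ShannonEntropy

variable {Ω G G' : Type*} [MeasurableSpace Ω] (μ : Measure Ω)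

lemma shannonEntropy_nonneg [IsProbabilityMeasure μ] [Fintype G] (Y : Ω → G) :
    0 ≤ shannonEntropy μ Y :=
  Finset.sum_nonneg fun _ _ ↦ Real.negMulLog_nonneg ENNReal.toReal_nonneg
    (ENNReal.toReal_le_of_le_ofReal zero_le_one (by simpa using prob_le_one))

lemma shannonEntropy_le_card [IsProbabilityMeasure μ] [Fintype Ω] [Fintype G] (Y : Ω → G) :
    shannonEntropy μ Y ≤ Fintype.card Ω := by
  classical
  have hvanish : ∀ y ∈ Finset.univ, y ∉ Finset.univ.image Y →
      Real.negMulLog (μ (Y ⁻¹' {y})).toReal = 0 := fun y _ hy ↦ by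
    simp [Set.preimage_singleton_eq_empty.2 (by simpa using hy)]
  calc shannonEntropy μ Y
      = ∑ y ∈ Finset.univ.image Y, Real.negMulLog (μ (Y ⁻¹' {y})).toReal :=
        (Finset.sum_subset (Finset.subset_univ _) hvanish).symm
    _ ≤ ∑ _y ∈ Finset.univ.image Y, (1 : ℝ) := by
        refine Finset.sum_le_sum fun y _ ↦ ?_
        linarith [Real.negMulLog_le_one_sub_self (μ (Y ⁻¹' {y})).toReal_nonneg,
          (μ (Y ⁻¹' {y})).toReal_nonneg]
    _ ≤ Fintype.card Ω := by
        simpa using Finset.card_image_le (s := Finset.univ) (f := Y)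

lemma shannonEntropy_comp_injective [Fintype G] [Fintype G'] (Y : Ω → G) {ι : G → G'}
    (hι : Function.Injective ι) : shannonEntropy μ (ι ∘ Y) = shannonEntropy μ Y := by
  refine (Fintype.sum_of_injective ι hι _ _ (fun y hy ↦ ?_) fun g ↦ ?_).symm
  · rw [Set.preimage_comp, Set.preimage_singleton_eq_empty.2 hy]
    simp
  · rw [Set.preimage_comp, ← Set.image_singleton, hι.preimage_image]

lemma shannonEntropy_eq_log_card [Fintype G] (Y : Ω → G)
    (hY : ∀ g, μ (Y ⁻¹' {g}) = (Fintype.card G : ENNReal)⁻¹) :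
    shannonEntropy μ Y = Real.log (Fintype.card G) := by
  simp only [shannonEntropy, hY, ENNReal.toReal_inv, ENNReal.toReal_natCast, Real.negMulLog,
    Real.log_inv, Finset.sum_const, Finset.card_univ, nsmul_eq_mul]
  rcases eq_or_ne (Fintype.card G : ℝ) 0 with h | h
  · simp [h]
  · field_simp

end ShannonEntropy

lemma jointEntropy_empty {Ω F : Type*} [MeasurableSpace Ω] [Fintype F] (μ : Measure Ω)
    [IsProbabilityMeasure μ] (X : ℤ → Ω → F) : jointEntropy μ X ∅ = 0 := by
  rw [jointEntropy, shannonEntropy_eq_log_card]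
  · simp
  · intro g
    rw [Set.eq_univ_of_forall (s := _ ⁻¹' {g}) fun ω ↦ Subsingleton.elim _ g]
    simp

lemma procEntropy_eq_zero_of_fintype {Ω F : Type*} [MeasurableSpace Ω] [Fintype Ω] [Fintype F]
    (μ : Measure Ω) [IsProbabilityMeasure μ] (X : ℤ → Ω → F) : procEntropy μ X = 0 := by
  refine Tendsto.limsup_eq (tendsto_of_tendsto_of_tendsto_of_le_of_le tendsto_const_nhds
    (tendsto_const_div_atTop_nhds_zero_nat (Fintype.card Ω : ℝ)) (fun n ↦ ?_) fun n ↦ ?_)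
  · exact div_nonneg (shannonEntropy_nonneg μ _) n.cast_nonneg
  · exact div_le_div_of_nonneg_right (shannonEntropy_le_card μ _) n.cast_nonneg

lemma isStationaryProcess_of_shift {Ω F : Type*} [MeasurableSpace Ω] {μ : Measure Ω}
    {X : ℤ → Ω → F} (T : ℤ → Ω → Ω) (hT : ∀ c A, μ (T c ⁻¹' A) = μ A)
    (hX : ∀ c i, X (i + c) = X i ∘ T c) : IsStationaryProcess μ X := by
  intro c n t s
  simp only [hX, Set.preimage_comp, ← Set.preimage_iInter, hT]

section UniformOn

variable {Ω : Type*} [MeasurableSpace Ω] [MeasurableSingletonClass Ω] [Fintype Ω]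

lemma uniformOn_univ_preimage_equiv (e : Ω ≃ Ω) (A : Set Ω) :
    uniformOn Set.univ (e ⁻¹' A) = uniformOn Set.univ A := by
  rw [uniformOn_univ, uniformOn_univ, ← e.image_symm_eq_preimage,
    Measure.count_injective_image e.symm.injective]

open Finset in
lemma uniformOn_univ_preimage_singleton [AddGroup Ω] {H : Type*} [AddGroup H] [Fintype H]
    {φ : Ω →+ H} (hφ : Function.Surjective φ) (h : H) :
    uniformOn Set.univ (φ ⁻¹' {h}) = (Fintype.card H : ENNReal)⁻¹ := by
  classical
  have hfiber : ∀ h', #{g | φ g = h'} = #{g | φ g = h} := fun h' ↦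
    AddMonoidHom.card_fiber_eq_of_mem_range φ (hφ h') (hφ h)
  have hcard : Fintype.card Ω = Fintype.card H * #{g | φ g = h} := by
    rw [← Finset.card_univ, Finset.card_eq_sum_card_fiberwise (f := φ) (t := Finset.univ)
      (fun _ _ ↦ Finset.mem_univ _)]
    simp [hfiber]
  have hpos : #{g | φ g = h} ≠ 0 := by
    obtain ⟨g, rfl⟩ := hφ h
    exact (Finset.card_pos.2 ⟨g, by simp⟩).ne'
  have hpre : φ ⁻¹' {h} = ↑({g | φ g = h} : Finset Ω) := by ext; simp
  rw [uniformOn_univ, hpre, Measure.count_apply_finset, hcard, Nat.cast_mul,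
    ENNReal.div_eq_inv_mul, ENNReal.mul_inv (by simp) (by simp), mul_assoc,
    ENNReal.inv_mul_cancel (by simpa using hpos) (by simp), mul_one]

end UniformOn

section RotationProcess

abbrev RotationSpace (k : ℕ) := ZMod k × (ZMod k → ZMod 2)

/-- `X_i = (Z + i, ζ_{i mod k})`, with the signs written additively in `ℤ/2`; it carries the same
information as the paper's `X_i = (Z ⊕ i) ζ_{i mod k}`. -/
def rotationProcess (k : ℕ) (i : ℤ) (ω : RotationSpace k) : ZMod k × ZMod 2 :=
  (ω.1 + i, ω.2 i)

variable (k : ℕ)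

lemma isStationaryProcess_rotationProcess [NeZero k] :
    IsStationaryProcess (uniformOn Set.univ) (rotationProcess k) := by
  let T (c : ℤ) : RotationSpace k ≃ RotationSpace k :=
    (Equiv.addRight (c : ZMod k)).prodCongr
      ((Equiv.addRight (c : ZMod k)).symm.arrowCongr (Equiv.refl _))
  refine isStationaryProcess_of_shift (fun c ↦ T c)
    (fun c ↦ uniformOn_univ_preimage_equiv (T c)) fun c i ↦ funext fun ω ↦ ?_
  simp [T, rotationProcess, add_assoc, add_comm]

def restrictSigns (R : Finset (ZMod k)) : RotationSpace k →+ ZMod k × (R → ZMod 2) where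
  toFun ω := (ω.1, fun e ↦ ω.2 e)
  map_zero' := rfl
  map_add' _ _ := rfl

lemma restrictSigns_surjective (R : Finset (ZMod k)) :
    Function.Surjective (restrictSigns k R) := by
  classical
  rintro ⟨z, f⟩
  exact ⟨(z, fun e ↦ if he : e ∈ R then f ⟨e, he⟩ else 0), by simp [restrictSigns]⟩

open Finset in
lemma jointEntropy_rotationProcess [NeZero k] {s : Finset ℤ} (hs : s.Nonempty) :
    jointEntropy (uniformOn Set.univ) (rotationProcess k) s
      = Real.log (k * 2 ^ #(s.image (Int.cast : ℤ → ZMod k))) := by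
  set R := s.image (Int.cast : ℤ → ZMod k)
  let ι : ZMod k × (R → ZMod 2) → (s → ZMod k × ZMod 2) :=
    fun q i ↦ (q.1 + i, q.2 ⟨i, mem_image_of_mem _ i.2⟩)
  have hι : Function.Injective ι := by
    intro q q' h
    obtain ⟨i₀, hi₀⟩ := hs
    refine Prod.ext (add_right_cancel (congrArg Prod.fst (congrFun h ⟨i₀, hi₀⟩)))
      (funext fun ⟨e, he⟩ ↦ ?_)
    obtain ⟨i, hi, rfl⟩ := mem_image.1 he
    exact congrArg Prod.snd (congrFun h ⟨i, hi⟩)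
  have hfactor : (fun ω (i : s) ↦ rotationProcess k i ω) = ι ∘ restrictSigns k R := rfl
  rw [jointEntropy, hfactor, shannonEntropy_comp_injective _ _ hι, shannonEntropy_eq_log_card _ _
    (uniformOn_univ_preimage_singleton (restrictSigns_surjective k R))]
  simp [Fintype.card_prod, ZMod.card]

open Finset in
theorem condEntropyOn_rotationProcess [NeZero k] {e : ZMod k} (he : e ≠ 0) {S : Set ℤ}
    (hS : ∀ i ∈ S, (i : ZMod k) = e) (hSne : S.Nonempty) :
    condEntropyOn (uniformOn Set.univ) (rotationProcess k) S = Real.log 2 := by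
  have hk : (1 : ℝ) ≤ k := Nat.one_le_cast.2 (Nat.pos_of_neZero k)
  have hgain : ∀ s : Finset ℤ, ↑s ⊆ S → s.Nonempty →
      jointEntropy (uniformOn Set.univ) (rotationProcess k) (insert 0 s)
        - jointEntropy (uniformOn Set.univ) (rotationProcess k) s = Real.log 2 := by
    intro s hsS hs
    have himage : s.image (Int.cast : ℤ → ZMod k) = {e} := by
      rw [image_congr fun i hi ↦ hS i (hsS hi), image_const hs]
    rw [jointEntropy_rotationProcess k (insert_nonempty 0 s), jointEntropy_rotationProcess k hs,
      image_insert, himage, Int.cast_zero, card_pair he.symm, card_singleton, ← Real.log_div]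
    · congr 1
      field_simp
    all_goals positivity
  have hlower : ∀ s : {s : Finset ℤ // ↑s ⊆ S}, Real.log 2 ≤
      jointEntropy (uniformOn Set.univ) (rotationProcess k) (insert 0 s.1)
        - jointEntropy (uniformOn Set.univ) (rotationProcess k) s.1 := by
    rintro ⟨s, hsS⟩
    rcases s.eq_empty_or_nonempty with rfl | hs
    · rw [jointEntropy_empty, sub_zero, jointEntropy_rotationProcess k (insert_nonempty 0 ∅)]
      refine Real.log_le_log two_pos ?_
      simp only [insert_empty, image_singleton, card_singleton, pow_one]
      exact le_mul_of_one_le_left zero_le_two hk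
    · exact (hgain s hsS hs).ge
  have : Nonempty {s : Finset ℤ // ↑s ⊆ S} := ⟨⟨∅, by simp⟩⟩
  obtain ⟨i₀, hi₀⟩ := hSne
  exact le_antisymm
    ((ciInf_le ⟨_, Set.forall_mem_range.2 hlower⟩ ⟨{i₀}, by simpa using hi₀⟩).trans
      (hgain {i₀} (by simpa using hi₀) (singleton_nonempty i₀)).le)
    (le_ciInf hlower)

end RotationProcess

theorem arithmeticProgression_not_predictive_general (k r : ℕ)
    (hr1 : 1 ≤ r) (hr2 : r ≤ k - 1) :
    ∃ (Ω F : Type) (_ : MeasurableSpace Ω) (_ : MeasurableSpace F)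
      (_ : Fintype F) (μ : Measure Ω) (_ : IsProbabilityMeasure μ)
      (X : ℤ → Ω → F),
      (∀ i, Measurable (X i)) ∧ IsStationaryProcess μ X ∧
      procEntropy μ X = 0 ∧
      condEntropyOn μ X {i : ℤ | ∃ n : ℕ, 1 ≤ n ∧ (k : ℤ) * n + r = i}
        = Real.log 2 := by
  have : NeZero k := ⟨by omega⟩
  have hr : (r : ZMod k) ≠ 0 := by
    rw [Ne, ZMod.natCast_eq_zero_iff]
    exact Nat.not_dvd_of_pos_of_lt hr1 (by omega)
  refine ⟨RotationSpace k, ZMod k × ZMod 2, inferInstance, inferInstance, inferInstance,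
    uniformOn Set.univ, inferInstance, rotationProcess k, fun i ↦ measurable_of_finite _,
    isStationaryProcess_rotationProcess k, procEntropy_eq_zero_of_fintype _ _,
    condEntropyOn_rotationProcess k hr ?_ ⟨k + r, 1, le_rfl, by simp⟩⟩
  rintro _ ⟨n, -, rfl⟩
  simp

/-- For k ≥ 2 and 1 ≤ r ≤ k−1, the arithmetic progression kℕ + r is not
predictive: there is a finite-valued zero-entropy stationary process with
H(X_0 | X_p : p ∈ kℕ+r) = log 2. -/
theorem arithmeticProgression_not_predictive (k r : ℕ) (hk : 2 ≤ k)
    (hr1 : 1 ≤ r) (hr2 : r ≤ k - 1) :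
    ∃ (Ω F : Type) (_ : MeasurableSpace Ω) (_ : MeasurableSpace F)
      (_ : Fintype F) (μ : Measure Ω) (_ : IsProbabilityMeasure μ)
      (X : ℤ → Ω → F),
      (∀ i, Measurable (X i)) ∧ IsStationaryProcess μ X ∧
      procEntropy μ X = 0 ∧
      condEntropyOn μ X {i : ℤ | ∃ n : ℕ, 1 ≤ n ∧ (k : ℤ) * n + r = i}
        = Real.log 2 :=
  arithmeticProgression_not_predictive_general k r hr1 hr2
end

section
/- If P is a return-time set, then the set of integers n ∈ ℤ such that P + n contains a return-time set has bounded gaps. -/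
/-! Write `P = N(U,U)`. A family of pairwise a.e.-disjoint preimages `T⁻ⁱU` has at most `1 / μ U`
members, so some finite family `{T⁻ⁱU : i ∈ s}` is maximal; then every `T⁻ⁿU` with `n > max s`
meets some `T⁻ⁱU`, i.e. `n - i ∈ P`, and `P` has gaps at most `max s + 1`.

Every `t ∈ P` gives two shifts of `P` containing a return-time set. With `V = U ∩ T⁻ᵗU`,
`t + N(V,V) ⊆ P`. The multiples of `t + 1` in `N(V,V)` form again a return-time set (that of
`V × {0}` under `T × (x ↦ x + 1)` on `Y × ℤ/(t+1)`); they all exceed `t`, so they lie in `P + t`.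
Together with the shift `0`, the shifts `±t`, `t ∈ P`, have bounded gaps in `ℤ`. -/

open MeasureTheory

/-- A ⊆ ℕ is a return-time set: A = N(U,U) = {n ≥ 1 : μ(U ∩ T⁻ⁿU) > 0} for
some probability preserving transformation (Y,μ,T) and U with μ(U) > 0. -/
def IsReturnTimeSet (A : Set ℕ) : Prop :=
  ∃ (Y : Type) (_ : MeasurableSpace Y) (μ : Measure Y)
    (_ : IsProbabilityMeasure μ) (T : Y → Y) (U : Set Y),
    MeasurePreserving T μ μ ∧ MeasurableSet U ∧ 0 < μ U ∧
    A = {n : ℕ | 1 ≤ n ∧ 0 < μ (U ∩ T^[n] ⁻¹' U)}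

open scoped ENNReal

def returnTimes {Y : Type*} [MeasurableSpace Y] (μ : Measure Y) (T : Y → Y) (U : Set Y) :
    Set ℕ :=
  {n | 1 ≤ n ∧ 0 < μ (U ∩ T^[n] ⁻¹' U)}

lemma isReturnTimeSet_returnTimes {Y : Type} [MeasurableSpace Y] {μ : Measure Y}
    [IsProbabilityMeasure μ] {T : Y → Y} {U : Set Y} (hT : MeasurePreserving T μ μ)
    (hU : MeasurableSet U) (hU0 : 0 < μ U) : IsReturnTimeSet (returnTimes μ T U) :=
  ⟨Y, _, μ, inferInstance, T, U, hT, hU, hU0, rfl⟩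

section Recurrence

open Function

variable {Y : Type*} [MeasurableSpace Y] {μ : Measure Y} {T : Y → Y} {U : Set Y}

lemma MeasureTheory.MeasurePreserving.measure_iterate_preimage_inter_add
    (hT : MeasurePreserving T μ μ) {V W : Set Y} (hV : MeasurableSet V) (hW : MeasurableSet W)
    (b d : ℕ) :
    μ (T^[b] ⁻¹' V ∩ T^[b + d] ⁻¹' W) = μ (V ∩ T^[d] ⁻¹' W) := by
  rw [add_comm, iterate_add, Set.preimage_comp, ← Set.preimage_inter]
  exact (hT.iterate b).measure_preimage (hV.inter ((hT.iterate d).measurable hW)).nullMeasurableSet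

lemma card_mul_measure_le_one [IsProbabilityMeasure μ] (hT : MeasurePreserving T μ μ)
    (hU : MeasurableSet U) {s : Finset ℕ}
    (hs : (s : Set ℕ).Pairwise (AEDisjoint μ on fun i ↦ T^[i] ⁻¹' U)) :
    (s.card : ℝ≥0∞) * μ U ≤ 1 :=
  calc (s.card : ℝ≥0∞) * μ U = ∑ i ∈ s, μ (T^[i] ⁻¹' U) := by
        simp [(hT.iterate _).measure_preimage hU.nullMeasurableSet]
    _ = μ (⋃ i ∈ s, T^[i] ⁻¹' U) :=
        (measure_biUnion_finset₀ hs fun i _ ↦ ((hT.iterate i).measurable hU).nullMeasurableSet).symm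
    _ ≤ 1 := prob_le_one

lemma exists_finset_forall_not_aedisjoint [IsProbabilityMeasure μ]
    (hT : MeasurePreserving T μ μ) (hU : MeasurableSet U) (hU0 : μ U ≠ 0) :
    ∃ s : Finset ℕ, ∀ n ∉ s, ∃ i ∈ s, ¬ AEDisjoint μ (T^[i] ⁻¹' U) (T^[n] ⁻¹' U) := by
  by_contra! hgrow
  have hfamily : ∀ k : ℕ, ∃ s : Finset ℕ, s.card = k ∧
      (s : Set ℕ).Pairwise (AEDisjoint μ on fun i ↦ T^[i] ⁻¹' U) := by
    intro k
    induction k with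
    | zero => exact ⟨∅, rfl, by simp⟩
    | succ k ih =>
      obtain ⟨s, hcard, hs⟩ := ih
      obtain ⟨n, hn, hdisj⟩ := hgrow s
      refine ⟨insert n s, by rw [Finset.card_insert_of_notMem hn, hcard], ?_⟩
      rw [Finset.coe_insert, Set.pairwise_insert_of_symm]
      exact ⟨hs, fun i hi _ ↦ (hdisj i hi).symm⟩
  obtain ⟨k, hk⟩ := ENNReal.exists_nat_mul_gt hU0 ENNReal.one_ne_top
  obtain ⟨s, rfl, hs⟩ := hfamily k
  exact (card_mul_measure_le_one hT hU hs).not_gt hk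

theorem exists_returnTimes_gap_le [IsProbabilityMeasure μ] (hT : MeasurePreserving T μ μ)
    (hU : MeasurableSet U) (hU0 : μ U ≠ 0) :
    ∃ L : ℕ, 0 < L ∧ ∀ r : ℕ, ∃ k ∈ returnTimes μ T U, r < k ∧ k ≤ r + L := by
  obtain ⟨s, hs⟩ := exists_finset_forall_not_aedisjoint hT hU hU0
  refine ⟨s.sup id + 1, Nat.succ_pos _, fun r ↦ ?_⟩
  have hle : ∀ i ∈ s, i ≤ s.sup id := fun i hi ↦ Finset.le_sup (f := id) hi
  obtain ⟨i, hi, hmeet⟩ := hs (r + (s.sup id + 1)) fun hmem ↦ by have := hle _ hmem; omega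
  have hi_le := hle i hi
  obtain ⟨d, hd⟩ : ∃ d, r + (s.sup id + 1) = i + d := ⟨r + (s.sup id + 1) - i, by omega⟩
  rw [hd, AEDisjoint, hT.measure_iterate_preimage_inter_add hU hU] at hmeet
  exact ⟨d, ⟨by omega, pos_iff_ne_zero.mpr hmeet⟩, by omega, by omega⟩

lemma add_mem_returnTimes_of_mem_returnTimes_inter {t a : ℕ}
    (ha : a ∈ returnTimes μ T (U ∩ T^[t] ⁻¹' U)) : t + a ∈ returnTimes μ T U := by
  refine ⟨le_add_left ha.1, ha.2.trans_le (measure_mono fun x hx ↦ ⟨hx.1.1, ?_⟩)⟩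
  simpa [iterate_add_apply] using hx.2.2

lemma sub_mem_returnTimes_of_mem_returnTimes_inter (hT : MeasurePreserving T μ μ)
    (hU : MeasurableSet U) {t a : ℕ} (ha : a ∈ returnTimes μ T (U ∩ T^[t] ⁻¹' U))
    (hta : t < a) : a - t ∈ returnTimes μ T U := by
  refine ⟨by omega, ?_⟩
  rw [← hT.measure_iterate_preimage_inter_add hU hU t, Nat.add_sub_cancel' hta.le]
  exact ha.2.trans_le (measure_mono fun x hx ↦ ⟨hx.1.2, hx.2.1⟩)

end Recurrence

section Multiples

variable (k : ℕ)

noncomputable def uniformZMod : Measure (ZMod k) := (k : ℝ≥0∞)⁻¹ • Measure.count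

instance : (uniformZMod k).IsAddRightInvariant := by
  unfold uniformZMod; infer_instance

instance [NeZero k] : IsProbabilityMeasure (uniformZMod k) := by
  constructor
  simp [uniformZMod, ENNReal.inv_mul_cancel (NeZero.ne (k : ℝ≥0∞))]

lemma uniformZMod_pos_iff {s : Set (ZMod k)} : 0 < uniformZMod k s ↔ s.Nonempty := by
  simp [uniformZMod, pos_iff_ne_zero, Set.nonempty_iff_ne_empty]

lemma returnTimes_prod_rotation [NeZero k] {Y : Type*} [MeasurableSpace Y] (μ : Measure Y)
    [SFinite μ] (T : Y → Y) (U : Set Y) :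
    returnTimes (μ.prod (uniformZMod k)) (Prod.map T (· + 1)) (U ×ˢ {0}) =
      {n ∈ returnTimes μ T U | k ∣ n} := by
  ext n
  have hrot : ({0} ∩ (· + (n : ZMod k)) ⁻¹' {0} : Set (ZMod k)).Nonempty ↔ k ∣ n := by
    simp [← ZMod.natCast_eq_zero_iff]
  simp only [returnTimes, Prod.map_iterate, add_right_iterate, nsmul_one,
    Set.preimage_prod_map_prod, Set.prod_inter_prod, Measure.prod_prod, ENNReal.mul_pos_iff,
    uniformZMod_pos_iff, hrot, Set.mem_ofPred_eq, and_assoc]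

lemma IsReturnTimeSet.inter_dvd [NeZero k] {A : Set ℕ} (hA : IsReturnTimeSet A) :
    IsReturnTimeSet {n ∈ A | k ∣ n} := by
  obtain ⟨Y, _, μ, _, T, U, hT, hU, hU0, rfl⟩ := hA
  change IsReturnTimeSet {n ∈ returnTimes μ T U | k ∣ n}
  rw [← returnTimes_prod_rotation]
  refine isReturnTimeSet_returnTimes
    (hT.prod (measurePreserving_add_right (uniformZMod k) 1)) (hU.prod (by simp)) ?_
  rw [Measure.prod_prod]
  exact ENNReal.mul_pos hU0.ne' ((uniformZMod_pos_iff k).2 (Set.singleton_nonempty 0)).ne'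

end Multiples

def ShiftContainsReturnTimeSet (P : Set ℕ) (n : ℤ) : Prop :=
  ∃ A : Set ℕ, IsReturnTimeSet A ∧ ∀ a ∈ A, ∃ p ∈ P, (a : ℤ) = p + n

lemma shiftContainsReturnTimeSet_zero {P : Set ℕ} (hP : IsReturnTimeSet P) :
    ShiftContainsReturnTimeSet P 0 :=
  ⟨P, hP, fun a ha ↦ ⟨a, ha, by simp⟩⟩

section Shifts

variable {Y : Type} [MeasurableSpace Y] {μ : Measure Y} [IsProbabilityMeasure μ] {T : Y → Y}
  {U : Set Y}

lemma shiftContainsReturnTimeSet_neg (hT : MeasurePreserving T μ μ) (hU : MeasurableSet U)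
    {t : ℕ} (ht : t ∈ returnTimes μ T U) :
    ShiftContainsReturnTimeSet (returnTimes μ T U) (-t) := by
  refine ⟨_, isReturnTimeSet_returnTimes hT (hU.inter ((hT.iterate t).measurable hU)) ht.2,
    fun a ha ↦ ⟨t + a, add_mem_returnTimes_of_mem_returnTimes_inter ha, by push_cast; ring⟩⟩

lemma shiftContainsReturnTimeSet_natCast (hT : MeasurePreserving T μ μ) (hU : MeasurableSet U)
    {t : ℕ} (ht : t ∈ returnTimes μ T U) :
    ShiftContainsReturnTimeSet (returnTimes μ T U) t := by
  have hV := isReturnTimeSet_returnTimes hT (hU.inter ((hT.iterate t).measurable hU)) ht.2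
  refine ⟨_, hV.inter_dvd (t + 1), fun a ⟨ha, hdvd⟩ ↦ ?_⟩
  have hta : t < a := Nat.le_of_dvd ha.1 hdvd
  exact ⟨a - t, sub_mem_returnTimes_of_mem_returnTimes_inter hT hU ha hta, by omega⟩

end Shifts

lemma exists_mem_Ico_of_gaps_le {P : Set ℕ} {L : ℕ} (hP : ∀ r : ℕ, ∃ k ∈ P, r < k ∧ k ≤ r + L)
    {Q : ℤ → Prop} (h0 : Q 0) (hpos : ∀ k ∈ P, Q k) (hneg : ∀ k ∈ P, Q (-k)) (m : ℤ) :
    ∃ n : ℤ, m ≤ n ∧ n < m + L ∧ Q n := by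
  rcases lt_or_ge 0 m with hm | hm
  · obtain ⟨k, hk, hlt, hle⟩ := hP (m - 1).toNat
    exact ⟨k, by omega, by omega, hpos k hk⟩
  rcases lt_or_ge (m + L) 1 with hmL | hmL
  · obtain ⟨k, hk, hlt, hle⟩ := hP (-(m + L)).toNat
    exact ⟨-k, by omega, by omega, hneg k hk⟩
  · exact ⟨0, hm, by omega, h0⟩

/-- If P is a return-time set, then the set of n ∈ ℤ such that P + n contains
a return-time set has bounded gaps (is syndetic in ℤ). -/
theorem returnTime_shifts_syndetic (P : Set ℕ) (hP : IsReturnTimeSet P) :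
    ∃ L : ℤ, 0 < L ∧ ∀ m : ℤ, ∃ n : ℤ, m ≤ n ∧ n < m + L ∧
      ∃ A : Set ℕ, IsReturnTimeSet A ∧
        ∀ a ∈ A, ∃ p ∈ P, (a : ℤ) = (p : ℤ) + n := by
  obtain ⟨Y, _, μ, _, T, U, hT, hU, hU0, rfl⟩ := hP
  obtain ⟨L, hL, hgaps⟩ := exists_returnTimes_gap_le hT hU hU0.ne'
  refine ⟨L, by exact_mod_cast hL, exists_mem_Ico_of_gaps_le hgaps ?_ ?_ ?_⟩
  · exact shiftContainsReturnTimeSet_zero (isReturnTimeSet_returnTimes hT hU hU0)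
  · exact fun t ht ↦ shiftContainsReturnTimeSet_natCast hT hU ht
  · exact fun t ht ↦ shiftContainsReturnTimeSet_neg hT hU ht
end

section
/- Every SIP⋆ subset of ℕ has bounded gaps; equivalently, any subset of ℕ with unbounded gaps has a complement containing an SIP set. -/
/-!
If `P` has gaps of every length, choose a gap `[g t, g t + 2t + 2)` of `P` for each `t` and build
a superincreasing sequence by `s k = g (T k) + T k + 1`, where `T k = s 0 + ⋯ + s (k-1)`.
In a signed sum of distinct `s i`, the term with the largest index dominates all the others, so
a positive such sum lies within `T k` of some `s k`, hence inside the gap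
`[g (T k), g (T k) + 2 T k + 2)`. Thus `SIPset s` avoids `P`.
-/

open Finset

/-- The SIP (symmetric infinite-dimensional parallelepiped) set generated by a
sequence (s_i) of naturals: { Σ_i ε_i s_i : ε_i ∈ {−1,0,1}, finitely many
nonzero } ∩ ℕ (positive part). -/
def SIPset (s : ℕ → ℕ) : Set ℕ :=
  {n : ℕ | 1 ≤ n ∧ ∃ (t : Finset ℕ) (ε : ℕ → ℤ),
    (∀ i, ε i = -1 ∨ ε i = 0 ∨ ε i = 1) ∧
    (n : ℤ) = ∑ i ∈ t, ε i * (s i : ℤ)}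

section SignedSums

variable {ι R : Type*} [Ring R] [LinearOrder R] [IsStrictOrderedRing R]

theorem abs_sum_mul_le_sum_abs {ε s : ι → R} (hε : ∀ i, |ε i| ≤ 1) (t : Finset ι) :
    |∑ i ∈ t, ε i * s i| ≤ ∑ i ∈ t, |s i| :=
  calc |∑ i ∈ t, ε i * s i| ≤ ∑ i ∈ t, |ε i * s i| := abs_sum_le_sum_abs _ _
    _ ≤ ∑ i ∈ t, |s i| := sum_le_sum fun i _ => by
        rw [abs_mul]; exact mul_le_of_le_one_left (abs_nonneg _) (hε i)

theorem sum_mul_eq_zero_or_exists_leading_term {ε s : ℕ → R} (hε : ∀ i, |ε i| ≤ 1)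
    (t : Finset ℕ) :
    ∑ i ∈ t, ε i * s i = 0 ∨
      ∃ k, ε k ≠ 0 ∧ |∑ i ∈ t, ε i * s i - ε k * s k| ≤ ∑ i ∈ range k, |s i| := by
  induction t using Finset.induction_on_max with
  | empty => simp
  | insert a t hlt ih =>
    have hat : a ∉ t := fun ha => (hlt a ha).false
    rw [sum_insert hat]
    by_cases hεa : ε a = 0
    · simpa [hεa] using ih
    · refine .inr ⟨a, hεa, ?_⟩
      have hsub : t ⊆ range a := fun x hx => mem_range.2 (hlt x hx)
      calc |ε a * s a + ∑ i ∈ t, ε i * s i - ε a * s a| = |∑ i ∈ t, ε i * s i| := by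
            rw [add_sub_cancel_left]
        _ ≤ ∑ i ∈ t, |s i| := abs_sum_mul_le_sum_abs hε t
        _ ≤ ∑ i ∈ range a, |s i| :=
            sum_le_sum_of_subset_of_nonneg hsub fun i _ _ => abs_nonneg _

end SignedSums

theorem exists_abs_sub_le_of_mem_SIPset {s : ℕ → ℕ} (hs : ∀ k, ∑ i ∈ range k, s i < s k)
    {n : ℕ} (hn : n ∈ SIPset s) : ∃ k, |(n : ℤ) - s k| ≤ ∑ i ∈ range k, (s i : ℤ) := by
  obtain ⟨hn1, t, ε, hε, hsum⟩ := hn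
  have hε1 : ∀ i, |ε i| ≤ 1 := fun i => by rcases hε i with h | h | h <;> simp [h]
  rcases sum_mul_eq_zero_or_exists_leading_term hε1 t with h0 | ⟨k, hεk, hk⟩
  · rw [← hsum] at h0; omega
  rw [← hsum] at hk
  simp only [Nat.abs_cast] at hk
  have hsk : ∑ i ∈ range k, (s i : ℤ) < s k := by exact_mod_cast hs k
  obtain ⟨hlo, hhi⟩ := abs_le.1 hk
  rcases hε k with h | h | h
  · rw [h] at hlo hhi; omega
  · exact absurd h hεk
  · exact ⟨k, by rwa [h, one_mul] at hk⟩

def gapSums (g : ℕ → ℕ) : ℕ → ℕ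
  | 0 => 0
  | k + 1 => gapSums g k + (g (gapSums g k) + gapSums g k + 1)

def gapSeq (g : ℕ → ℕ) (k : ℕ) : ℕ := g (gapSums g k) + gapSums g k + 1

theorem gapSeq_pos (g : ℕ → ℕ) (k : ℕ) : 0 < gapSeq g k := Nat.succ_pos _

theorem gapSums_eq_sum (g : ℕ → ℕ) (k : ℕ) : gapSums g k = ∑ i ∈ range k, gapSeq g i := by
  induction k with
  | zero => rfl
  | succ k ih => rw [sum_range_succ, ← ih]; rfl

theorem sum_range_gapSeq_lt (g : ℕ → ℕ) (k : ℕ) : ∑ i ∈ range k, gapSeq g i < gapSeq g k := by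
  rw [← gapSums_eq_sum, gapSeq]; omega

theorem exists_gap_of_mem_SIPset_gapSeq (g : ℕ → ℕ) {n : ℕ} (hn : n ∈ SIPset (gapSeq g)) :
    ∃ t, g t ≤ n ∧ n < g t + (2 * t + 2) := by
  obtain ⟨k, hk⟩ := exists_abs_sub_le_of_mem_SIPset (sum_range_gapSeq_lt g) hn
  have hT : ∑ i ∈ range k, (gapSeq g i : ℤ) = gapSums g k := by
    rw [gapSums_eq_sum]; push_cast; rfl
  rw [hT] at hk
  obtain ⟨hlo, hhi⟩ := abs_le.1 hk
  refine ⟨gapSums g k, ?_, ?_⟩ <;> simp only [gapSeq] at hlo hhi <;> omega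

/-- Every SIP⋆ subset of ℕ (a set meeting every SIP set) has bounded gaps. -/
theorem sipStar_boundedGaps (P : Set ℕ)
    (hP : ∀ s : ℕ → ℕ, (∀ i, 0 < s i) → (P ∩ SIPset s).Nonempty) :
    ∃ L : ℕ, 0 < L ∧ ∀ m : ℕ, ∃ n ∈ P, m ≤ n ∧ n < m + L := by
  by_contra h
  push Not at h
  choose g hg using fun t : ℕ => h (2 * t + 2) (by omega)
  obtain ⟨n, hnP, hn⟩ := hP (gapSeq g) (gapSeq_pos g)
  obtain ⟨t, hgn, hng⟩ := exists_gap_of_mem_SIPset_gapSeq g hn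
  exact (hg t n hnP hgn).not_gt hng
end

section
/- For an irrational α ∈ 𝕋 and 0 < ε < 1/2, the set {n ∈ ℕ : nα mod 1 ∈ (0,ε)} is SIP⋆: it intersects every SIP set. -/
open Filter Finset Function Topology

lemma mem_SIPset_of_add_two_mul_sum_range_eq {s : ℕ → ℕ} {a b c n : ℕ} (hab : a ≤ b)
    (hbc : b ≤ c) (hn : 1 ≤ n)
    (h : n + 2 * ∑ i ∈ range b, s i = ∑ i ∈ range c, s i + ∑ i ∈ range a, s i) :
    n ∈ SIPset s := by
  set e : ℕ → ℤ := fun i => if i < b then -1 else 1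
  refine ⟨hn, Ico a c, e, fun i => by by_cases hi : i < b <;> simp [e, hi], ?_⟩
  have h_left : ∑ i ∈ Ico a b, e i * (s i : ℤ) = -∑ i ∈ Ico a b, (s i : ℤ) := by
    rw [← sum_neg_distrib]
    exact sum_congr rfl fun i hi => by simp [e, (mem_Ico.1 hi).2]
  have h_right : ∑ i ∈ Ico b c, e i * (s i : ℤ) = ∑ i ∈ Ico b c, (s i : ℤ) :=
    sum_congr rfl fun i hi => by simp [e, not_lt.2 (mem_Ico.1 hi).1]
  have hz : (n : ℤ) + 2 * ∑ i ∈ range b, (s i : ℤ) =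
      ∑ i ∈ range c, (s i : ℤ) + ∑ i ∈ range a, (s i : ℤ) := by exact_mod_cast h
  rw [← sum_Ico_consecutive _ hab hbc, h_left, h_right, sum_Ico_eq_sub _ hab,
    sum_Ico_eq_sub _ hbc]
  linarith

lemma strictMono_sum_range_of_pos {M : Type*} [AddCommMonoid M] [PartialOrder M]
    [IsOrderedCancelAddMonoid M] {s : ℕ → M} (hs : ∀ i, 0 < s i) :
    StrictMono fun k => ∑ i ∈ range k, s i :=
  strictMono_nat_of_lt_succ fun k => by
    rw [sum_range_succ]
    exact lt_add_of_pos_right _ (hs k)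

lemma Irrational.injective_fract_natCast_mul {α : ℝ} (hα : Irrational α) :
    Injective fun n : ℕ => Int.fract (n * α) := by
  intro m n hmn
  obtain ⟨z, hz⟩ := Int.fract_eq_fract.1 hmn
  by_contra hne
  have hirr : Irrational (((m - n : ℤ) : ℝ) * α) :=
    hα.intCast_mul (sub_ne_zero.2 (by exact_mod_cast hne))
  exact hirr.ne_int z (by push_cast; linarith)

lemma Int.fract_sub_sub_fract {R : Type*} [Ring R] [LinearOrder R] [IsStrictOrderedRing R]
    [FloorRing R] (u v w : R) :
    Int.fract ((w - v) - (v - u)) =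
      Int.fract ((Int.fract w - Int.fract v) - (Int.fract v - Int.fract u)) :=
  Int.fract_eq_fract.2
    ⟨⌊w⌋ - ⌊v⌋ - (⌊v⌋ - ⌊u⌋), by simp only [Int.fract]; push_cast; abel⟩

section SecondDifference

variable {x : ℕ → ℝ} {ε : ℝ}

lemma StrictMono.exists_sub_mem_Ioo (hx : StrictMono x) (hbdd : BddAbove (Set.range x))
    (hε : 0 < ε) (M : ℕ → ℕ) :
    ∃ b c, b < c ∧ M b ≤ c ∧ x c - x b ∈ Set.Ioo 0 ε := by
  have hL : Tendsto x atTop (𝓝 (⨆ k, x k)) := tendsto_atTop_ciSup hx.monotone hbdd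
  obtain ⟨b, hb⟩ := (hL.eventually (lt_mem_nhds (sub_lt_self _ hε))).exists
  refine ⟨b, max (b + 1) (M b), by omega, le_max_right _ _, sub_pos.2 (hx (by omega)), ?_⟩
  linarith [le_ciSup hbdd (max (b + 1) (M b))]

lemma StrictAnti.exists_secondDiff_mem_Ioo (hx : StrictAnti x) (hbdd : BddBelow (Set.range x))
    (hε : 0 < ε) (M : ℕ → ℕ) :
    ∃ a b c, a < b ∧ b < c ∧ M b ≤ c ∧ (x c - x b) - (x b - x a) ∈ Set.Ioo 0 ε := by
  set L := ⨅ k, x k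
  have hL : Tendsto x atTop (𝓝 L) := tendsto_atTop_ciInf hx.antitone hbdd
  have hLx : ∀ k, L ≤ x k := ciInf_le hbdd
  obtain ⟨a, ha⟩ := (hL.eventually (gt_mem_nhds (lt_add_of_pos_right L hε))).exists
  have haL : L < x a := (hLx (a + 1)).trans_lt (hx a.lt_succ_self)
  obtain ⟨n, hn⟩ := (hL.eventually (gt_mem_nhds
    (show L < L + (x a - L) / 2 by linarith))).exists_forall_of_atTop
  set b := max (a + 1) n
  have hb : x b < L + (x a - L) / 2 := hn b (le_max_right _ _)
  set c := max (b + 1) (M b)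
  have hab : x b < x a := hx (show a < b by omega)
  have hbc : x c < x b := hx (show b < c by omega)
  refine ⟨a, b, c, by omega, by omega, le_max_right _ _, ?_, ?_⟩ <;> linarith [hLx c]

lemma exists_secondDiff_mem_Ioo_of_injective (hx : Injective x)
    (hbdd : Bornology.IsBounded (Set.range x)) (hε : 0 < ε) (M : ℕ → ℕ) :
    ∃ a b c, a ≤ b ∧ b < c ∧ M b ≤ c ∧ (x c - x b) - (x b - x a) ∈ Set.Ioo 0 ε := by
  obtain ⟨g, hg | hg⟩ := exists_increasing_or_nonincreasing_subseq (· < ·) x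
  · obtain ⟨b, c, hbc, hc, hv⟩ := StrictMono.exists_sub_mem_Ioo (x := x ∘ g) hg
      (hbdd.bddAbove.mono (Set.range_comp_subset_range g x)) hε (M ∘ g)
    exact ⟨g b, g b, g c, le_rfl, g.strictMono hbc, hc.trans (g.strictMono.id_le c),
      by simpa using hv⟩
  · have hanti : StrictAnti (x ∘ g) := fun m n hmn =>
      (not_lt.1 (hg m n hmn)).lt_of_ne (hx.ne (g.injective.ne hmn.ne'))
    obtain ⟨a, b, c, hab, hbc, hc, hv⟩ := hanti.exists_secondDiff_mem_Ioo
      (hbdd.bddBelow.mono (Set.range_comp_subset_range g x)) hε (M ∘ g)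
    exact ⟨g a, g b, g c, (g.strictMono hab).le, g.strictMono hbc,
      hc.trans (g.strictMono.id_le c), hv⟩

end SecondDifference

/-- For irrational α and 0 < ε < 1/2, the set {n ∈ ℕ : nα mod 1 ∈ (0,ε)} is
SIP⋆: it intersects every SIP set (Akin–Glasner). -/
theorem visitTimes_irrational_rotation_isSIPStar (α : ℝ) (hα : Irrational α)
    (ε : ℝ) (hε0 : 0 < ε) (hε : ε < 1 / 2) (s : ℕ → ℕ) (hs : ∀ i, 0 < s i) :
    ∃ n ∈ SIPset s, Int.fract ((n : ℝ) * α) ∈ Set.Ioo 0 ε := by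
  set σ : ℕ → ℕ := fun k => ∑ i ∈ range k, s i
  have hσ : StrictMono σ := strictMono_sum_range_of_pos hs
  set x : ℕ → ℝ := fun k => Int.fract ((σ k : ℝ) * α)
  have hx_bdd : Bornology.IsBounded (Set.range x) :=
    (Metric.isBounded_Icc (0 : ℝ) 1).subset <| Set.range_subset_iff.2 fun k =>
      ⟨Int.fract_nonneg _, (Int.fract_lt_one _).le⟩
  obtain ⟨a, b, c, hab, hbc, hc, hv⟩ := exists_secondDiff_mem_Ioo_of_injective (x := x)
    (hα.injective_fract_natCast_mul.comp hσ.injective) hx_bdd hε0 (fun b => 2 * σ b)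
  obtain ⟨n, hn⟩ : ∃ n, n + 2 * σ b = σ c + σ a :=
    ⟨σ c + σ a - 2 * σ b, by have : c ≤ σ c := hσ.id_le c; omega⟩
  have hfract : Int.fract ((n : ℝ) * α) = (x c - x b) - (x b - x a) := by
    have hnα : (n : ℝ) * α = ((σ c : ℝ) * α - σ b * α) - (σ b * α - σ a * α) := by
      have hnr : (n : ℝ) + 2 * σ b = σ c + σ a := by exact_mod_cast hn
      linear_combination α * hnr
    rw [hnα, Int.fract_sub_sub_fract, Int.fract_eq_self.2 ⟨hv.1.le, by linarith [hv.2]⟩]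
  have hn_pos : 1 ≤ n := Nat.one_le_iff_ne_zero.2 fun h0 => by
    simp only [h0, Nat.cast_zero, zero_mul, Int.fract_zero] at hfract
    linarith [hv.1]
  exact ⟨n, mem_SIPset_of_add_two_mul_sum_range_eq hab hbc.le hn_pos hn, hfract ▸ hv⟩
end

section
/- Let Q ⊆ ℕ be nonempty with (Q+Q) ∩ Q = ∅ (equivalently ℕ∖Q is Δ_3⋆). If μ is a probability measure on 𝕋 whose Fourier coefficients vanish outside Q ∪ (−Q) ∪ {0}, then Σ_{s ∈ Q} |μ̂(s)|² ≤ 1; in particular μ is not singular with respect to Lebesgue measure. -/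
/-!
For frequencies `k s` whose pairwise differences lie outside the Fourier support of `μ`, the
trigonometric polynomial `f = ∑ μ̂(k s) e_{k s}` satisfies `∫ f dμ = ∫ |f|² dμ = ∑ |μ̂(k s)|² =: S`,
so Cauchy–Schwarz gives `S² ≤ S`. If `Q` is sum-free, differences of distinct elements of `Q` lie
outside `Q ∪ (-Q) ∪ {0}`, so this applies to every finite subset of `Q`.

The bound puts `μ̂` in `ℓ²(ℤ)`, so `μ̂` is the coefficient sequence of some `h ∈ L²(𝕋)`. The
functionals `φ ↦ ∫ φ dμ` and `φ ↦ ∫ conj h · φ` on `C(𝕋)` agree on trigonometric polynomials, hence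
everywhere; testing against nonnegative `φ` gives `μ ≤ |h| dx`, so `μ` is absolutely continuous.
-/

open MeasureTheory AddCircle
open scoped ComplexConjugate NNReal InnerProductSpace BoundedContinuousFunction

namespace MeasureTheory

theorem measure_isClosed_le_of_forall_lintegral_le {Ω : Type*} [MeasurableSpace Ω]
    [TopologicalSpace Ω] [HasOuterApproxClosed Ω] [OpensMeasurableSpace Ω] {μ ν : Measure Ω}
    [IsFiniteMeasure μ] [IsFiniteMeasure ν] (h : ∀ f : Ω →ᵇ ℝ≥0, ∫⁻ x, f x ∂μ ≤ ∫⁻ x, f x ∂ν)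
    {F : Set Ω} (hF : IsClosed F) : μ F ≤ ν F :=
  le_of_tendsto_of_tendsto' (HasOuterApproxClosed.tendsto_lintegral_apprSeq hF μ)
    (HasOuterApproxClosed.tendsto_lintegral_apprSeq hF ν) fun _ => h _

theorem Measure.le_of_forall_lintegral_le {Ω : Type*} [MeasurableSpace Ω] [TopologicalSpace Ω]
    [HasOuterApproxClosed Ω] [OpensMeasurableSpace Ω] {μ ν : Measure Ω}
    [IsFiniteMeasure μ] [μ.WeaklyRegular] [IsFiniteMeasure ν]
    (h : ∀ f : Ω →ᵇ ℝ≥0, ∫⁻ x, f x ∂μ ≤ ∫⁻ x, f x ∂ν) : μ ≤ ν := by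
  refine Measure.le_iff.2 fun s hs => ?_
  rw [hs.measure_eq_iSup_isClosed_of_ne_top (measure_ne_top μ s)]
  exact iSup₂_le fun F hFs => iSup_le fun hF =>
    (measure_isClosed_le_of_forall_lintegral_le h hF).trans (measure_mono hFs)

theorem norm_integral_sq_le_integral_norm_sq {α E : Type*} [MeasurableSpace α] {μ : Measure α}
    [IsProbabilityMeasure μ] [NormedAddCommGroup E] [NormedSpace ℝ E] [CompleteSpace E]
    {f : α → E} (hf : MemLp f 2 μ) : ‖∫ x, f x ∂μ‖ ^ 2 ≤ ∫ x, ‖f x‖ ^ 2 ∂μ :=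
  ((convexOn_norm convex_univ).pow (fun _ _ => norm_nonneg _) 2).map_integral_le
    (continuous_norm.pow 2).continuousOn isClosed_univ (ae_of_all _ fun _ => Set.mem_univ _)
    (hf.integrable one_le_two) (hf.integrable_norm_pow two_ne_zero)

namespace Measure

variable {T : ℝ}

noncomputable def fourierCoeff (μ : Measure (AddCircle T)) (n : ℤ) : ℂ :=
  ∫ x, fourier (-n) x ∂μ

variable (μ : Measure (AddCircle T))

theorem integral_fourier (n : ℤ) : ∫ x, fourier n x ∂μ = μ.fourierCoeff (-n) := by
  rw [fourierCoeff, neg_neg]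

theorem fourierCoeff_neg (n : ℤ) : μ.fourierCoeff (-n) = conj (μ.fourierCoeff n) := by
  simp only [fourierCoeff, neg_neg, ← integral_conj, fourier_neg, Complex.conj_conj]

theorem norm_fourierCoeff_neg (n : ℤ) : ‖μ.fourierCoeff (-n)‖ = ‖μ.fourierCoeff n‖ := by
  rw [fourierCoeff_neg, RCLike.norm_conj]

theorem fourierCoeff_zero [IsProbabilityMeasure μ] : μ.fourierCoeff 0 = 1 := by
  simp [fourierCoeff]

theorem summable_sq_norm_fourierCoeff_of_nat
    (h : Summable fun n : ℕ => ‖μ.fourierCoeff n‖ ^ 2) :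
    Summable fun n : ℤ => ‖μ.fourierCoeff n‖ ^ 2 :=
  .of_nat_of_neg h (by simpa only [norm_fourierCoeff_neg] using h)

section

variable [Fact (0 < T)] [IsFiniteMeasure μ]

theorem integral_sum_fourier {ι : Type*} (t : Finset ι) (k : ι → ℤ) (a : ι → ℂ) :
    ∫ x, ∑ s ∈ t, a s * fourier (k s) x ∂μ = ∑ s ∈ t, a s * μ.fourierCoeff (-k s) := by
  rw [integral_finsetSum _ fun s _ => ((fourier (k s)).continuous.integrable_of_hasCompactSupport
    (.of_compactSpace _)).const_mul _]
  simp only [integral_const_mul, integral_fourier]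

theorem integral_norm_sq_sum_fourier {ι : Type*} (t : Finset ι) (k : ι → ℤ) (a : ι → ℂ) :
    ((∫ x, ‖∑ s ∈ t, a s * fourier (k s) x‖ ^ 2 ∂μ : ℝ) : ℂ) =
      ∑ s ∈ t, conj (a s) * ∑ s' ∈ t, a s' * μ.fourierCoeff (k s - k s') := by
  have hexpand : ∀ x : AddCircle T, ((‖∑ s ∈ t, a s * fourier (k s) x‖ ^ 2 : ℝ) : ℂ) =
      ∑ s ∈ t, conj (a s) * ∑ s' ∈ t, a s' * fourier (k s' - k s) x := by
    intro x
    rw [Complex.ofReal_pow, ← Complex.conj_mul', _root_.map_sum, Finset.sum_mul]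
    refine Finset.sum_congr rfl fun s _ => ?_
    simp only [map_mul, Finset.mul_sum, sub_eq_add_neg, fourier_add, fourier_neg]
    exact Finset.sum_congr rfl fun s' _ => by ring
  rw [← integral_complex_ofReal]
  simp only [hexpand]
  rw [integral_finsetSum _ fun s _ => ?_]
  · refine Finset.sum_congr rfl fun s _ => ?_
    rw [integral_const_mul, integral_sum_fourier]
    simp only [neg_sub]
  · exact (Continuous.integrable_of_hasCompactSupport (by fun_prop) (.of_compactSpace _))

theorem sum_sq_norm_fourierCoeff_le_one [IsProbabilityMeasure μ] {ι : Type*} (t : Finset ι)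
    (k : ι → ℤ) (ht : ∀ s ∈ t, ∀ s' ∈ t, s ≠ s' → μ.fourierCoeff (k s - k s') = 0) :
    ∑ s ∈ t, ‖μ.fourierCoeff (k s)‖ ^ 2 ≤ 1 := by
  set S := ∑ s ∈ t, ‖μ.fourierCoeff (k s)‖ ^ 2
  set f : AddCircle T → ℂ := fun x => ∑ s ∈ t, μ.fourierCoeff (k s) * fourier (k s) x
  have hmean : ∫ x, f x ∂μ = S := by
    rw [integral_sum_fourier]
    push_cast [S]
    exact Finset.sum_congr rfl fun s _ => by rw [fourierCoeff_neg, Complex.mul_conj']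
  have hsq : ∫ x, ‖f x‖ ^ 2 ∂μ = S := by
    apply Complex.ofReal_injective
    rw [integral_norm_sq_sum_fourier]
    push_cast [S]
    refine Finset.sum_congr rfl fun s hs => ?_
    have hoff : ∀ s' ∈ t, s' ≠ s →
        μ.fourierCoeff (k s') * μ.fourierCoeff (k s - k s') = 0 :=
      fun s' hs' hne => by rw [ht s hs s' hs' hne.symm, mul_zero]
    rw [Finset.sum_eq_single_of_mem s hs hoff, sub_self, fourierCoeff_zero, mul_one, mul_comm,
      Complex.mul_conj']
  have hS : S ^ 2 ≤ S := by
    have hf : MemLp f 2 μ :=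
      (Continuous.memLp_of_hasCompactSupport (by fun_prop) (.of_compactSpace _))
    simpa [hmean, hsq, abs_of_nonneg (show 0 ≤ S by positivity)] using
      norm_integral_sq_le_integral_norm_sq hf
  nlinarith [show 0 ≤ S by positivity]

end

section

variable [Fact (0 < T)]

theorem exists_Lp_fourierBasis_repr_eq (hs : Summable fun n : ℤ => ‖μ.fourierCoeff n‖ ^ 2) :
    ∃ h : Lp ℂ 2 (haarAddCircle (T := T)),
      ∀ n, fourierBasis.repr h n = μ.fourierCoeff n :=
  ⟨fourierBasis.repr.symm ⟨μ.fourierCoeff, (memℓp_gen_iff (by norm_num)).2 (by simpa using hs)⟩,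
    fun n => by simp⟩

variable [IsFiniteMeasure μ]

theorem integral_eq_inner_toLp_of_fourierBasis_repr
    {h : Lp ℂ 2 (haarAddCircle (T := T))}
    (hh : ∀ n, fourierBasis.repr h n = μ.fourierCoeff n) (φ : C(AddCircle T, ℂ)) :
    ∫ x, φ x ∂μ = ⟪h, ContinuousMap.toLp 2 haarAddCircle ℂ φ⟫_ℂ := by
  have hdense : Dense (Submodule.span ℂ (Set.range (fourier (T := T))) : Set C(AddCircle T, ℂ)) :=
    Submodule.dense_iff_topologicalClosure_eq_top.2 span_fourier_closure_eq_top
  have hext : innerSL ℂ (ContinuousMap.toLp 2 μ ℂ 1) ∘L ContinuousMap.toLp 2 μ ℂ =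
      innerSL ℂ h ∘L ContinuousMap.toLp 2 haarAddCircle ℂ := by
    refine ContinuousLinearMap.ext_on hdense ?_
    rintro _ ⟨n, rfl⟩
    change ⟪ContinuousMap.toLp 2 μ ℂ 1, ContinuousMap.toLp 2 μ ℂ (fourier n)⟫_ℂ =
      ⟪h, fourierLp 2 n⟫_ℂ
    rw [ContinuousMap.inner_toLp, ← inner_conj_symm, ← coe_fourierBasis,
      ← HilbertBasis.repr_apply_apply, hh, ← fourierCoeff_neg, ← integral_fourier]
    simp only [ContinuousMap.one_apply, map_one, mul_one]
  simpa [ContinuousMap.inner_toLp] using congr($hext φ)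

theorem lintegral_le_lintegral_enorm_mul_of_fourierBasis_repr
    {h : Lp ℂ 2 (haarAddCircle (T := T))}
    (hh : ∀ n, fourierBasis.repr h n = μ.fourierCoeff n) (f : AddCircle T →ᵇ ℝ≥0) :
    ∫⁻ x, f x ∂μ ≤ ∫⁻ x, ‖h x‖ₑ * f x ∂haarAddCircle := by
  let φ : C(AddCircle T, ℂ) := ⟨fun x => ((f x : ℝ) : ℂ), by fun_prop⟩
  calc ∫⁻ x, f x ∂μ = ‖∫ x, φ x ∂μ‖ₑ := by
        rw [lintegral_coe_eq_integral _
          (Continuous.integrable_of_hasCompactSupport (by fun_prop) (.of_compactSpace _))]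
        have hpos : 0 ≤ ∫ x, (f x : ℝ) ∂μ := integral_nonneg fun x => (f x).coe_nonneg
        simp [φ, integral_complex_ofReal, ← ofReal_norm, abs_of_nonneg hpos]
    _ = ‖⟪h, ContinuousMap.toLp 2 haarAddCircle ℂ φ⟫_ℂ‖ₑ := by
        rw [integral_eq_inner_toLp_of_fourierBasis_repr μ hh]
    _ ≤ ∫⁻ x, ‖h x‖ₑ * f x ∂haarAddCircle := by
        rw [L2.inner_def]
        refine (enorm_integral_le_lintegral_enorm _).trans_eq (lintegral_congr_ae ?_)
        filter_upwards [ContinuousMap.coeFn_toLp (p := 2) (𝕜 := ℂ) haarAddCircle φ]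
          with x hx
        rw [hx]
        simp [φ, mul_comm, ← ofReal_norm]

theorem absolutelyContinuous_volume_of_summable_sq_norm_fourierCoeff
    (hs : Summable fun n : ℤ => ‖μ.fourierCoeff n‖ ^ 2) : μ ≪ volume := by
  obtain ⟨h, hh⟩ := μ.exists_Lp_fourierBasis_repr_eq hs
  set ρ := haarAddCircle.withDensity fun x => ‖h x‖ₑ
  have : IsFiniteMeasure ρ :=
    isFiniteMeasure_withDensity ((Lp.memLp h).integrable one_le_two).hasFiniteIntegral.ne
  have hle : μ ≤ ρ := Measure.le_of_forall_lintegral_le fun f => by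
    rw [lintegral_withDensity_eq_lintegral_mul₀ (Lp.aestronglyMeasurable h).enorm
      (by fun_prop)]
    exact μ.lintegral_le_lintegral_enorm_mul_of_fourierBasis_repr hh f
  rw [volume_eq_smul_haarAddCircle]
  exact hle.absolutelyContinuous.trans <| (withDensity_absolutelyContinuous _ _).trans <|
    absolutelyContinuous_smul (ENNReal.ofReal_pos.2 (Fact.out : 0 < T)).ne'

end

theorem fourierCoeff_natCast_sub_eq_zero_of_add_notMem {Q : Set ℕ}
    (hsum : ∀ a ∈ Q, ∀ b ∈ Q, a + b ∉ Q)
    (hsupp : ∀ n : ℤ, μ.fourierCoeff n ≠ 0 →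
      (∃ q ∈ Q, (q : ℤ) = n) ∨ (∃ q ∈ Q, -(q : ℤ) = n) ∨ n = 0)
    {s s' : ℕ} (hs : s ∈ Q) (hs' : s' ∈ Q) (hne : s ≠ s') :
    μ.fourierCoeff (s - s') = 0 := by
  by_contra h
  rcases hsupp _ h with ⟨q, hq, hqe⟩ | ⟨q, hq, hqe⟩ | h0
  · exact hsum s' hs' q hq (by rwa [show s' + q = s by omega])
  · exact hsum s hs q hq (by rwa [show s + q = s' by omega])
  · omega

theorem summable_sq_norm_fourierCoeff_of_support {Q : Set ℕ}
    (hsupp : ∀ n : ℤ, μ.fourierCoeff n ≠ 0 →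
      (∃ q ∈ Q, (q : ℤ) = n) ∨ (∃ q ∈ Q, -(q : ℤ) = n) ∨ n = 0)
    {C : ℝ} (hQ : ∀ t : Finset ℕ, ↑t ⊆ Q → ∑ s ∈ t, ‖μ.fourierCoeff s‖ ^ 2 ≤ C) :
    Summable fun n : ℤ => ‖μ.fourierCoeff n‖ ^ 2 := by
  classical
  set c : ℕ → ℝ := fun n => ‖μ.fourierCoeff n‖ ^ 2
  have hQc : Summable (Q.indicator c) :=
    summable_of_sum_le (fun n => Set.indicator_nonneg (fun n _ => by positivity) n) fun t => by
      rw [Finset.sum_indicator_eq_sum_filter]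
      exact hQ _ fun n hn => (Finset.mem_filter.1 hn).2
  have hvanish : ∀ n : ℕ, n + 1 ∉ Q → c (n + 1) = 0 := by
    intro n hn
    by_contra h
    rcases hsupp (n + 1 : ℕ) (by simpa [c] using h) with ⟨q, hq, hqe⟩ | ⟨q, hq, hqe⟩ | h0
    · exact hn (by rwa [show q = n + 1 by omega] at hq)
    · omega
    · omega
  refine summable_sq_norm_fourierCoeff_of_nat μ ((summable_nat_add_iff 1).1 ?_)
  refine ((summable_nat_add_iff 1).2 hQc).congr fun n => ?_
  by_cases hn : n + 1 ∈ Q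
  · simp [hn, c]
  · rw [Set.indicator_of_notMem hn]
    exact (hvanish n hn).symm

end Measure

end MeasureTheory

theorem fourier_support_sum_free_not_singular_general (Q : Set ℕ)
    (hsum : ∀ a ∈ Q, ∀ b ∈ Q, a + b ∉ Q)
    (μ : Measure (AddCircle (1 : ℝ))) [IsProbabilityMeasure μ]
    (hsupp : ∀ n : ℤ, (∫ x, fourier (-n) x ∂μ) ≠ 0 →
      (∃ q ∈ Q, (q : ℤ) = n) ∨ (∃ q ∈ Q, -(q : ℤ) = n) ∨ n = 0) :
    (∀ t : Finset ℕ, ↑t ⊆ Q →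
      ∑ s ∈ t, ‖∫ x, fourier (-(s : ℤ)) x ∂μ‖ ^ 2 ≤ 1)
    ∧ ¬ μ ⟂ₘ (volume : Measure (AddCircle (1 : ℝ))) := by
  have hbound : ∀ t : Finset ℕ, ↑t ⊆ Q → ∑ s ∈ t, ‖μ.fourierCoeff s‖ ^ 2 ≤ 1 := fun t ht =>
    μ.sum_sq_norm_fourierCoeff_le_one t _ fun s hs s' hs' hne =>
      μ.fourierCoeff_natCast_sub_eq_zero_of_add_notMem hsum hsupp (ht hs) (ht hs') hne
  have hac : μ ≪ volume := μ.absolutelyContinuous_volume_of_summable_sq_norm_fourierCoeff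
    (μ.summable_sq_norm_fourierCoeff_of_support hsupp hbound)
  exact ⟨hbound, fun hsing => IsProbabilityMeasure.ne_zero μ
    (Measure.eq_zero_of_absolutelyContinuous_of_mutuallySingular hac hsing)⟩

/-- Let Q ⊆ ℕ∖{0} be nonempty with (Q+Q) ∩ Q = ∅ (equivalently ℕ∖Q is Δ₃⋆).
If μ is a probability measure on 𝕋 whose Fourier coefficients vanish outside
Q ∪ (−Q) ∪ {0}, then Σ_{s∈Q} |μ̂(s)|² ≤ 1 (over every finite subset of Q);
in particular μ is not singular with respect to Lebesgue measure. -/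
theorem fourier_support_sum_free_not_singular (Q : Set ℕ) (hQne : Q.Nonempty)
    (hQ0 : 0 ∉ Q) (hsum : ∀ a ∈ Q, ∀ b ∈ Q, a + b ∉ Q)
    (μ : Measure (AddCircle (1 : ℝ))) [IsProbabilityMeasure μ]
    (hsupp : ∀ n : ℤ, (∫ x, fourier (-n) x ∂μ) ≠ 0 →
      (∃ q ∈ Q, (q : ℤ) = n) ∨ (∃ q ∈ Q, -(q : ℤ) = n) ∨ n = 0) :
    (∀ t : Finset ℕ, ↑t ⊆ Q →
      ∑ s ∈ t, ‖∫ x, fourier (-(s : ℤ)) x ∂μ‖ ^ 2 ≤ 1)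
    ∧ ¬ μ ⟂ₘ (volume : Measure (AddCircle (1 : ℝ))) :=
  fourier_support_sum_free_not_singular_general Q hsum μ hsupp
end

section
/- Let S = SIP⁺(5, 5², 5³, …) = { Σ_i ε_i 5^i : ε_i ∈ {−1,0,1}, finitely many nonzero } ∩ ℕ. Then S ∪ {0} is small: for every n ∈ ℕ, the set {i ∈ ℤ : [i, i+n] ∩ S = ∅} has bounded gaps. -/
open Finset

lemma exists_abs_sum_sub_mul_le {s ε : ℕ → ℤ} {P : ℤ} {k : ℕ} (hs : ∀ i, k ≤ i → P ∣ s i)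
    (hε : ∀ i, |ε i| ≤ 1) (t : Finset ℕ) :
    ∃ q : ℤ, |∑ i ∈ t, ε i * s i - q * P| ≤ ∑ i ∈ range k, |s i| := by
  obtain ⟨q, hq⟩ : P ∣ ∑ i ∈ t.filter (fun i => ¬ i < k), ε i * s i :=
    dvd_sum fun i hi => (hs i (not_lt.mp (mem_filter.mp hi).2)).mul_left _
  refine ⟨q, ?_⟩
  rw [← sum_filter_add_sum_filter_not t (· < k), hq, mul_comm P q, add_sub_cancel_right]
  calc |∑ i ∈ t.filter (· < k), ε i * s i|
      ≤ ∑ i ∈ t.filter (· < k), |ε i * s i| := abs_sum_le_sum_abs _ _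
    _ ≤ ∑ i ∈ t.filter (· < k), |s i| := by
        refine sum_le_sum fun i _ => ?_
        rw [abs_mul]
        exact mul_le_of_le_one_left (abs_nonneg _) (hε i)
    _ ≤ ∑ i ∈ range k, |s i| :=
        sum_le_sum_of_subset_of_nonneg (fun i hi => mem_range.mpr (mem_filter.mp hi).2)
          fun _ _ _ => abs_nonneg _

lemma exists_abs_sub_mul_pow_five_le {a : ℕ} (ha : a ∈ SIPset (fun t => 5 ^ (t + 1)) ∪ {0})
    (k : ℕ) : ∃ q : ℤ, |(a : ℤ) - q * 5 ^ (k + 1)| ≤ ∑ i ∈ range k, (5 : ℤ) ^ (i + 1) := by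
  have hsum : ∑ i ∈ range k, (5 : ℤ) ^ (i + 1) = ∑ i ∈ range k, |(5 : ℤ) ^ (i + 1)| := by
    simp only [abs_pow, abs_of_pos (show (0 : ℤ) < 5 by norm_num)]
  rcases ha with ⟨-, t, ε, hε, ha⟩ | ha
  · have hε' : ∀ i, |ε i| ≤ 1 := fun i => by rcases hε i with h | h | h <;> simp [h]
    rw [ha, hsum]
    push_cast
    exact exists_abs_sum_sub_mul_le (fun i hi => pow_dvd_pow 5 (by omega)) hε' t
  · rw [Set.mem_singleton_iff.mp ha]
    exact ⟨0, by simpa using sum_nonneg fun i _ => by positivity⟩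

lemma four_mul_sum_range_pow_five (n : ℕ) :
    4 * ∑ i ∈ range n, (5 : ℤ) ^ (i + 1) = 5 ^ (n + 1) - 5 := by
  induction n with
  | zero => simp
  | succ k ih =>
    rw [sum_range_succ, mul_add, ih]
    ring

lemma exists_run_far_from_multiples {P M : ℤ} (n : ℕ) (hM : 0 ≤ M) (hP : 2 * M + n + 1 < P)
    (m : ℤ) : ∃ i, m ≤ i ∧ i ≤ m + P ∧
      ∀ j, i ≤ j → j ≤ i + n → ∀ q : ℤ, M < |j - q * P| := by
  have hPpos : 0 < P := by omega
  set r := (M + 1 - m) % P with hr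
  have hr0 : 0 ≤ r := Int.emod_nonneg _ hPpos.ne'
  have hrP : r < P := Int.emod_lt_of_pos _ hPpos
  refine ⟨m + r, by omega, by omega, fun j hij hjn q => ?_⟩
  obtain ⟨c, hc⟩ : ∃ c, j - q * P = (j - (m + r) + M + 1) + c * P :=
    ⟨-q - (M + 1 - m) / P, by rw [hr, Int.emod_def]; ring⟩
  rw [hc, lt_abs]
  rcases le_or_gt 0 c with hc0 | hc0
  · left; nlinarith
  · right; nlinarith

/-- For S = SIP⁺(5, 5², 5³, …), the set S ∪ {0} is small: for every n, the set
of i ∈ ℤ such that the interval [i, i+n] is disjoint from S ∪ {0} has bounded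
gaps. -/
theorem sip_powers_of_five_small (n : ℕ) :
    ∃ L : ℤ, 0 < L ∧ ∀ m : ℤ, ∃ i : ℤ, m ≤ i ∧ i ≤ m + L ∧
      ∀ j : ℤ, i ≤ j → j ≤ i + (n : ℤ) →
        ¬ ∃ a ∈ SIPset (fun t => 5 ^ (t + 1)) ∪ {0}, (a : ℤ) = j := by
  set M := ∑ i ∈ range n, (5 : ℤ) ^ (i + 1)
  have hM : 0 ≤ M := sum_nonneg fun i _ => by positivity
  have hn : (n : ℤ) < 5 ^ n := by exact_mod_cast Nat.lt_pow_self (by norm_num)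
  have hP : 2 * M + n + 1 < 5 ^ (n + 1) := by
    linarith [four_mul_sum_range_pow_five n, pow_succ (5 : ℤ) n]
  refine ⟨5 ^ (n + 1), by positivity, fun m => ?_⟩
  obtain ⟨i, hmi, him, hfar⟩ := exists_run_far_from_multiples n hM hP m
  refine ⟨i, hmi, him, fun j hij hjn ⟨a, ha, haj⟩ => ?_⟩
  obtain ⟨q, hq⟩ := exists_abs_sub_mul_pow_five_le ha n
  exact (hfar j hij hjn q).not_ge (haj ▸ hq)
end
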